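/- Define J_n = sup over t₁,…,tₙ ≥ 0 of (1 + U(t₁ + ⋯ + tₙ)) / ∏_{j=1}^n (1 + U(tⱼ)). Then J_n ~ (log n)/(3π) as n → ∞. -/

import Mathlib

open Real Filter

set_option maxHeartbeats 2000000

open MeasureTheory intervalIntegral

/-- The Uehling multiplier `U`. -/
noncomputable def U (r : ℝ) : ℝ :=
  r ^ 2 / (4 * π) * ∫ z in (0:ℝ)..1, (z ^ 2 - z ^ 4 / 3) / (1 + r ^ 2 * (1 - z ^ 2) / 4)

lemma numer_nonneg {z : ℝ} (h0 : 0 ≤ z) (h1 : z ≤ 1) : 0 ≤ z ^ 2 - z ^ 4 / 3 := by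
  have hz2 : z ^ 2 ≤ 1 := by nlinarith
  nlinarith [mul_nonneg (mul_nonneg h0 h0) (sub_nonneg.2 hz2)]

lemma denom_pos (r : ℝ) {z : ℝ} (hz : z ∈ Set.Icc (0:ℝ) 1) :
    0 < 1 + r ^ 2 * (1 - z ^ 2) / 4 := by
  have h1 : 0 ≤ 1 - z ^ 2 := by nlinarith [hz.1, hz.2]
  positivity

lemma intble (r : ℝ) (g : ℝ → ℝ) (hg : Continuous g) :
    IntervalIntegrable (fun z => g z / (1 + r ^ 2 * (1 - z ^ 2) / 4)) volume 0 1 := by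
  apply ContinuousOn.intervalIntegrable
  apply ContinuousOn.div hg.continuousOn (by fun_prop)
  intro z hz
  rw [Set.uIcc_of_le (by norm_num : (0:ℝ) ≤ 1)] at hz
  exact (denom_pos r hz).ne'

lemma U_nonneg (r : ℝ) : 0 ≤ U r := by
  have h : 0 ≤ ∫ z in (0:ℝ)..1, (z ^ 2 - z ^ 4 / 3) / (1 + r ^ 2 * (1 - z ^ 2) / 4) := by
    apply intervalIntegral.integral_nonneg (by norm_num)
    intro z hz
    have h1 := denom_pos r hz
    have h2 : 0 ≤ z ^ 2 - z ^ 4 / 3 := numer_nonneg hz.1 hz.2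
    positivity
  have : 0 ≤ r ^ 2 / (4 * π) := by positivity
  exact mul_nonneg this h

lemma U_zero : U 0 = 0 := by simp [U]

lemma U_le_sq (r : ℝ) : U r ≤ r ^ 2 / (15 * π) := by
  have h : (∫ z in (0:ℝ)..1, (z ^ 2 - z ^ 4 / 3) / (1 + r ^ 2 * (1 - z ^ 2) / 4))
      ≤ ∫ z in (0:ℝ)..1, (z ^ 2 - z ^ 4 / 3) := by
    apply intervalIntegral.integral_mono_on (by norm_num) (intble r _ (by fun_prop))
      (by apply ContinuousOn.intervalIntegrable; fun_prop)
    intro z hz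
    have h1 := denom_pos r hz
    have h2 : 0 ≤ z ^ 2 - z ^ 4 / 3 := numer_nonneg hz.1 hz.2
    have h3 : 0 ≤ r ^ 2 * (1 - z ^ 2) / 4 := by
      have : 0 ≤ 1 - z ^ 2 := by nlinarith [hz.1, hz.2]
      positivity
    rw [div_le_iff₀ h1]
    nlinarith [mul_nonneg h2 h3]
  have h2 : (∫ z in (0:ℝ)..1, (z ^ 2 - z ^ 4 / 3)) = 4 / 15 := by
    rw [intervalIntegral.integral_sub (by apply ContinuousOn.intervalIntegrable; fun_prop)
      (by apply ContinuousOn.intervalIntegrable; fun_prop)]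
    simp [intervalIntegral.integral_div, integral_pow]
    norm_num
  have hπ : 0 < π := pi_pos
  calc U r ≤ r ^ 2 / (4 * π) * (4 / 15) := by
        apply mul_le_mul_of_nonneg_left (h.trans h2.le) (by positivity)
      _ = r ^ 2 / (15 * π) := by field_simp

lemma intble2 (b : ℝ) (hb : 0 ≤ b) (g : ℝ → ℝ) (hg : Continuous g) :
    IntervalIntegrable (fun z => g z / (1 + b * (1 - z ^ 2))) volume 0 1 := by
  apply ContinuousOn.intervalIntegrable
  apply ContinuousOn.div hg.continuousOn (by fun_prop)
  intro z hz
  rw [Set.uIcc_of_le (by norm_num : (0:ℝ) ≤ 1)] at hz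
  have : 0 ≤ b * (1 - z ^ 2) := mul_nonneg hb (by nlinarith [hz.1, hz.2])
  nlinarith

lemma integral_z_eq (r : ℝ) (hr : r ≠ 0) :
    (∫ z in (0:ℝ)..1, z / (1 + r ^ 2 * (1 - z ^ 2) / 4))
      = 2 / r ^ 2 * Real.log (1 + r ^ 2 / 4) := by
  have hb : 0 < r ^ 2 / 4 := by positivity
  set b : ℝ := r ^ 2 / 4 with hbdef
  have key : ∀ z ∈ Set.uIcc (0:ℝ) 1,
      HasDerivAt (fun y => -(1 / (2 * b)) * Real.log (1 + b * (1 - y ^ 2)))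
        (z / (1 + b * (1 - z ^ 2))) z := by
    intro z hz
    rw [Set.uIcc_of_le (by norm_num : (0:ℝ) ≤ 1)] at hz
    have hd : 0 < 1 + b * (1 - z ^ 2) := by
      have : 0 ≤ b * (1 - z ^ 2) := mul_nonneg hb.le (by nlinarith [hz.1, hz.2])
      nlinarith
    have h2 : HasDerivAt (fun y : ℝ => 1 + b * (1 - y ^ 2)) (b * (-(2 * z))) z := by
      have h0 := (((hasDerivAt_pow 2 z).const_sub 1).const_mul b).const_add 1
      refine h0.congr_deriv ?_
      simp
    have h3 := (h2.log hd.ne').const_mul (-(1 / (2 * b)))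
    refine h3.congr_deriv ?_
    field_simp
  have hcongr : (∫ z in (0:ℝ)..1, z / (1 + r ^ 2 * (1 - z ^ 2) / 4))
      = ∫ z in (0:ℝ)..1, z / (1 + b * (1 - z ^ 2)) := by
    apply intervalIntegral.integral_congr
    intro z hz
    rw [hbdef]
    ring_nf
  rw [hcongr, intervalIntegral.integral_eq_sub_of_hasDerivAt key
    (intble2 b hb.le _ continuous_id)]
  have h1 : (1:ℝ) + b * (1 - 1 ^ 2) = 1 := by ring
  have h0 : (1:ℝ) + b * (1 - 0 ^ 2) = 1 + b := by ring
  rw [h1, h0, Real.log_one]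
  have : (2:ℝ) / r ^ 2 = 1 / (2 * b) := by
    rw [hbdef]
    rw [div_eq_div_iff (by positivity) (by positivity)]
    ring
  rw [this]
  ring

lemma div_le_div_of_nonneg_right'' {a b c : ℝ} (h : a ≤ b) (hc : 0 < c) : a / c ≤ b / c := by
  exact div_le_div_of_nonneg_right h hc.le

lemma integral_poly : (∫ z in (0:ℝ)..1, (z ^ 2 - z ^ 4 / 3)) = 4 / 15 := by
  rw [intervalIntegral.integral_sub (by apply ContinuousOn.intervalIntegrable; fun_prop)
    (by apply ContinuousOn.intervalIntegrable; fun_prop)]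
  simp [intervalIntegral.integral_div, integral_pow]
  norm_num

lemma numer_le {z : ℝ} (h0 : 0 ≤ z) (h1 : z ≤ 1) : z ^ 2 - z ^ 4 / 3 ≤ 2 / 3 * z := by
  nlinarith [mul_nonneg (mul_nonneg h0 (sub_nonneg.2 h1)) (sq_nonneg (1 - z)),
    mul_nonneg (sq_nonneg (1 - z)) h0]

lemma numer_ge {z : ℝ} (h0 : 0 ≤ z) (h1 : z ≤ 1) :
    2 / 3 * z - (1 - z) ^ 2 ≤ z ^ 2 - z ^ 4 / 3 := by
  nlinarith [mul_nonneg (sq_nonneg (1 - z)) (by nlinarith : (0:ℝ) ≤ 3 - 2 * z - z ^ 2)]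

lemma integral_ztwothirds (r : ℝ) (hr : r ≠ 0) :
    (∫ z in (0:ℝ)..1, (2 / 3 * z) / (1 + r ^ 2 * (1 - z ^ 2) / 4))
      = 2 / 3 * (2 / r ^ 2 * Real.log (1 + r ^ 2 / 4)) := by
  rw [← integral_z_eq r hr, ← intervalIntegral.integral_const_mul]
  apply intervalIntegral.integral_congr
  intro z hz
  ring

lemma U_le_log (r : ℝ) : U r ≤ 1 / (3 * π) * Real.log (1 + r ^ 2 / 4) := by
  rcases eq_or_ne r 0 with rfl | hr
  · simp [U_zero]
  have hπ : 0 < π := pi_pos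
  have hr2 : 0 < r ^ 2 := by positivity
  have hmono : (∫ z in (0:ℝ)..1, (z ^ 2 - z ^ 4 / 3) / (1 + r ^ 2 * (1 - z ^ 2) / 4))
      ≤ ∫ z in (0:ℝ)..1, (2 / 3 * z) / (1 + r ^ 2 * (1 - z ^ 2) / 4) := by
    apply intervalIntegral.integral_mono_on (by norm_num)
      (intble r _ (by fun_prop)) (intble r _ (by fun_prop))
    intro z hz
    have := denom_pos r hz
    gcongr
    exact numer_le hz.1 hz.2
  have : U r ≤ r ^ 2 / (4 * π) * (2 / 3 * (2 / r ^ 2 * Real.log (1 + r ^ 2 / 4))) := by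
    rw [← integral_ztwothirds r hr]
    exact mul_le_mul_of_nonneg_left hmono (by positivity)
  calc U r ≤ _ := this
    _ = 1 / (3 * π) * Real.log (1 + r ^ 2 / 4) := by field_simp; ring

lemma U_ge_log (r : ℝ) : 1 / (3 * π) * Real.log (1 + r ^ 2 / 4) - 1 / (2 * π) ≤ U r := by
  have hπ : 0 < π := pi_pos
  rcases eq_or_ne r 0 with rfl | hr
  · simpa [U_zero] using by positivity
  have hr2 : 0 < r ^ 2 := by positivity
  have hb : 0 < r ^ 2 / 4 := by positivity
  -- error integral bound
  have herr : (∫ z in (0:ℝ)..1, (1 - z) ^ 2 / (1 + r ^ 2 * (1 - z ^ 2) / 4))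
      ≤ 2 / r ^ 2 := by
    have hmono : (∫ z in (0:ℝ)..1, (1 - z) ^ 2 / (1 + r ^ 2 * (1 - z ^ 2) / 4))
        ≤ ∫ z in (0:ℝ)..1, (1 - z) / (r ^ 2 / 4) := by
      apply intervalIntegral.integral_mono_on (by norm_num)
        (intble r _ (by fun_prop))
        (by apply ContinuousOn.intervalIntegrable; fun_prop)
      intro z hz
      have hd := denom_pos r hz
      rw [div_le_div_iff₀ hd (by positivity)]
      have h1 : 0 ≤ 1 - z := by linarith [hz.2]
      nlinarith [mul_nonneg (mul_nonneg hb.le h1) (mul_nonneg h1 hz.1),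
        mul_nonneg h1 h1]
    have hval : (∫ z in (0:ℝ)..1, (1 - z) / (r ^ 2 / 4)) = 2 / r ^ 2 := by
      rw [intervalIntegral.integral_div]
      have : (∫ z in (0:ℝ)..1, (1 - z)) = 1 / 2 := by
        rw [intervalIntegral.integral_sub intervalIntegrable_const
          (by apply ContinuousOn.intervalIntegrable; fun_prop)]
        simp [integral_id]
        norm_num
      rw [this]
      field_simp
      ring
    linarith [hmono, hval.le, hval.ge]
  have hsplit : (∫ z in (0:ℝ)..1, (2 / 3 * z - (1 - z) ^ 2) / (1 + r ^ 2 * (1 - z ^ 2) / 4))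
      = (∫ z in (0:ℝ)..1, (2 / 3 * z) / (1 + r ^ 2 * (1 - z ^ 2) / 4))
        - (∫ z in (0:ℝ)..1, (1 - z) ^ 2 / (1 + r ^ 2 * (1 - z ^ 2) / 4)) := by
    rw [← intervalIntegral.integral_sub (intble r _ (by fun_prop)) (intble r _ (by fun_prop))]
    apply intervalIntegral.integral_congr
    intro z hz
    ring
  have hmono2 : (∫ z in (0:ℝ)..1, (2 / 3 * z) / (1 + r ^ 2 * (1 - z ^ 2) / 4))
        - (∫ z in (0:ℝ)..1, (1 - z) ^ 2 / (1 + r ^ 2 * (1 - z ^ 2) / 4))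
      ≤ ∫ z in (0:ℝ)..1, (z ^ 2 - z ^ 4 / 3) / (1 + r ^ 2 * (1 - z ^ 2) / 4) := by
    rw [← hsplit]
    apply intervalIntegral.integral_mono_on (by norm_num)
      (intble r _ (by fun_prop)) (intble r _ (by fun_prop))
    intro z hz
    have hd := denom_pos r hz
    exact div_le_div_of_nonneg_right'' (numer_ge hz.1 hz.2) hd
  have hU : r ^ 2 / (4 * π) * ((2 / 3 * (2 / r ^ 2 * Real.log (1 + r ^ 2 / 4))) - 2 / r ^ 2)
      ≤ U r := by
    rw [← integral_ztwothirds r hr]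
    apply mul_le_mul_of_nonneg_left _ (by positivity)
    linarith [hmono2, herr]
  calc 1 / (3 * π) * Real.log (1 + r ^ 2 / 4) - 1 / (2 * π)
      = r ^ 2 / (4 * π) * ((2 / 3 * (2 / r ^ 2 * Real.log (1 + r ^ 2 / 4))) - 2 / r ^ 2) := by
        field_simp; ring
    _ ≤ U r := hU

lemma U_ge_min (r : ℝ) (hr : 0 ≤ r) : (min r 2) ^ 2 / (30 * π) ≤ U r := by
  have hπ : 0 < π := pi_pos
  have hmono : (∫ z in (0:ℝ)..1, (z ^ 2 - z ^ 4 / 3) / (1 + r ^ 2 / 4))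
      ≤ ∫ z in (0:ℝ)..1, (z ^ 2 - z ^ 4 / 3) / (1 + r ^ 2 * (1 - z ^ 2) / 4) := by
    apply intervalIntegral.integral_mono_on (by norm_num)
      (by apply ContinuousOn.intervalIntegrable; fun_prop (disch := positivity))
      (intble r _ (by fun_prop))
    intro z hz
    have hd := denom_pos r hz
    have hnum := numer_nonneg hz.1 hz.2
    gcongr
    nlinarith [mul_nonneg (sq_nonneg r) (sq_nonneg z)]
  have hval : (∫ z in (0:ℝ)..1, (z ^ 2 - z ^ 4 / 3) / (1 + r ^ 2 / 4))
      = (4 / 15) / (1 + r ^ 2 / 4) := by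
    rw [intervalIntegral.integral_div, integral_poly]
  have hbase : r ^ 2 / (4 * π) * ((4 / 15) / (1 + r ^ 2 / 4)) ≤ U r := by
    rw [← hval]
    exact mul_le_mul_of_nonneg_left hmono (by positivity)
  have heq : r ^ 2 / (4 * π) * ((4 / 15) / (1 + r ^ 2 / 4))
      = (4 * r ^ 2) / (15 * (4 * π) * (1 + r ^ 2 / 4)) := by
    rw [div_mul_div_comm, div_eq_div_iff (by positivity) (by positivity)]
    ring
  rcases le_total r 2 with h | h
  · rw [min_eq_left h]
    refine le_trans ?_ hbase
    have hr4 : r ^ 2 ≤ 4 := by nlinarith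
    rw [heq, div_le_div_iff₀ (by positivity) (by positivity)]
    nlinarith [mul_nonneg hπ.le (mul_nonneg (sq_nonneg r) (sub_nonneg.2 hr4))]
  · rw [min_eq_right h]
    refine le_trans ?_ hbase
    have h4 : 4 ≤ r ^ 2 := by nlinarith
    rw [heq, div_le_div_iff₀ (by positivity) (by positivity)]
    nlinarith [mul_nonneg hπ.le (sub_nonneg.2 h4)]

lemma one_add_sum_le_prod {ι : Type*} (s : Finset ι) (f : ι → ℝ) (hf : ∀ i, 0 ≤ f i) :
    1 + ∑ i ∈ s, f i ≤ ∏ i ∈ s, (1 + f i) := by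
  classical
  induction s using Finset.induction with
  | empty => simp
  | @insert a s' h ih =>
    rw [Finset.sum_insert h, Finset.prod_insert h]
    have h1 : 0 ≤ ∑ i ∈ s', f i := Finset.sum_nonneg fun i _ => hf i
    nlinarith [hf a, mul_nonneg (hf a) h1]

lemma main_bound (n : ℕ) (hn : 1 ≤ n) (t : Fin n → ℝ) (ht : ∀ j, 0 ≤ t j) :
    1 + U (∑ j, t j) ≤ (∏ j, (1 + U (t j))) *
      (1 / (3 * π) * Real.log n + (2 + 1 / (2 * π) + 1 / (3 * π) * Real.log 150)) := by
  classical
  have hπ : 0 < π := pi_pos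
  have hβ0 : (0:ℝ) ≤ 1 / (3 * π) := by positivity
  haveI : Nonempty (Fin n) := Fin.pos_iff_nonempty.mp (by omega)
  obtain ⟨j₀, -, hj₀⟩ := Finset.exists_max_image Finset.univ t Finset.univ_nonempty
  set M := t j₀ with hMdef
  have hM0 : 0 ≤ M := ht j₀
  set s : ℝ := ∑ j, t j with hsdef
  set s' : ℝ := ∑ j ∈ Finset.univ.erase j₀, t j with hs'def
  have hsum : s = M + s' := (Finset.add_sum_erase _ t (Finset.mem_univ j₀)).symm
  have hs'0 : 0 ≤ s' := Finset.sum_nonneg fun i _ => ht i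
  have hs0 : 0 ≤ s := by linarith
  set Q : ℝ := ∑ j ∈ Finset.univ.erase j₀, (min (t j) 2) ^ 2 with hQdef
  have hQ0 : 0 ≤ Q := Finset.sum_nonneg fun i _ => sq_nonneg _
  set q : ℝ := Q / (30 * π) with hqdef
  have hq0 : 0 ≤ q := by positivity
  set u : ℝ := U M with hudef
  have hu0 : 0 ≤ u := U_nonneg M
  set Ln : ℝ := Real.log n with hLndef
  have hLn0 : 0 ≤ Ln := Real.log_nonneg (by exact_mod_cast hn)
  set Cc : ℝ := 2 + 1 / (2 * π) + 1 / (3 * π) * Real.log 150 with hCcdef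
  set X : ℝ := 1 / (3 * π) * Ln + Cc with hXdef
  have hlog150 : (0:ℝ) ≤ Real.log 150 := Real.log_nonneg (by norm_num)
  have hX1 : 1 ≤ X := by
    have h1 : 0 ≤ 1 / (3 * π) * Ln := mul_nonneg hβ0 hLn0
    have h2 : 0 ≤ 1 / (3 * π) * Real.log 150 := mul_nonneg hβ0 hlog150
    have h3 : 0 ≤ 1 / (2 * π) := by positivity
    rw [hXdef, hCcdef]; linarith
  -- denominator bound
  have hD : (1 + u) * (1 + q) ≤ ∏ j, (1 + U (t j)) := by
    rw [← Finset.mul_prod_erase _ _ (Finset.mem_univ j₀)]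
    apply mul_le_mul_of_nonneg_left _ (by linarith [U_nonneg (t j₀)] : (0:ℝ) ≤ 1 + U (t j₀))
    have h1 : 1 + q ≤ 1 + ∑ j ∈ Finset.univ.erase j₀, U (t j) := by
      have h2 : Q / (30 * π) = ∑ j ∈ Finset.univ.erase j₀, (min (t j) 2) ^ 2 / (30 * π) := by
        rw [hQdef, Finset.sum_div]
      have h3 : ∑ j ∈ Finset.univ.erase j₀, (min (t j) 2) ^ 2 / (30 * π)
          ≤ ∑ j ∈ Finset.univ.erase j₀, U (t j) :=
        Finset.sum_le_sum fun j _ => U_ge_min (t j) (ht j)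
      rw [hqdef, h2]; linarith
    exact h1.trans (one_add_sum_le_prod _ _ fun i => U_nonneg (t i))
  have hDX : (1 + u) * (1 + q) * X ≤ (∏ j, (1 + U (t j))) * X :=
    mul_le_mul_of_nonneg_right hD (by linarith)
  have e1 : X + q * X + u * X ≤ (1 + u) * (1 + q) * X := by
    nlinarith [mul_nonneg (mul_nonneg hu0 hq0) (by linarith : (0:ℝ) ≤ X)]
  have e2 : u ≤ u * X := by nlinarith
  have e3 : q ≤ q * X := by nlinarith
  have hUs : U s ≤ 1 / (3 * π) * Real.log (1 + s ^ 2 / 4) := U_le_log s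
  have hUM : 1 / (3 * π) * Real.log (1 + M ^ 2 / 4) - 1 / (2 * π) ≤ u := U_ge_log M
  set ℓ : ℝ := Real.log (1 + M ^ 2 / 4) with hℓdef
  have hℓ0 : 0 ≤ ℓ := Real.log_nonneg (by nlinarith)
  clear_value M s s' Q q u Ln Cc X ℓ
  rcases le_total s' M with hcase | hcase
  · -- Case 1 : s ≤ 2 M
    have hs2M : s ≤ 2 * M := by linarith
    have hlog : Real.log (1 + s ^ 2 / 4) ≤ Real.log 4 + ℓ := by
      rw [hℓdef, ← Real.log_mul (by norm_num) (by positivity)]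
      apply Real.log_le_log (by positivity)
      nlinarith
    have hβlog : 1 / (3 * π) * Real.log (1 + s ^ 2 / 4)
        ≤ 1 / (3 * π) * (Real.log 4 + ℓ) := mul_le_mul_of_nonneg_left hlog hβ0
    have hlog4 : Real.log 4 ≤ Real.log 150 := Real.log_le_log (by norm_num) (by norm_num)
    have hβlog4 : 1 / (3 * π) * Real.log 4 ≤ 1 / (3 * π) * Real.log 150 :=
      mul_le_mul_of_nonneg_left hlog4 hβ0
    have hLnX : 1 / (3 * π) * Ln ≥ 0 := mul_nonneg hβ0 hLn0
    refine le_trans ?_ hDX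
    refine le_trans ?_ e1
    -- 1 + U s ≤ X + qX + uX
    have hqX : 0 ≤ q * X := mul_nonneg hq0 (le_trans zero_le_one hX1)
    linarith [hUs, hβlog, hβlog4, hUM, e2, hqX, hLnX, hXdef, hCcdef]
  · -- Case 2 : M ≤ s'
    have hSg : s' ≤ (1 + M / 2) * ∑ j ∈ Finset.univ.erase j₀, min (t j) 2 := by
      rw [Finset.mul_sum, hs'def]
      apply Finset.sum_le_sum
      intro j hj
      rcases le_total (t j) 2 with h2 | h2
      · rw [min_eq_left h2]
        nlinarith [ht j]
      · rw [min_eq_right h2]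
        have := hj₀ j (Finset.mem_univ j)
        nlinarith
    have hCS : (∑ j ∈ Finset.univ.erase j₀, min (t j) 2) ^ 2 ≤ (n : ℝ) * Q := by
      have := sq_sum_le_card_mul_sum_sq (s := Finset.univ.erase j₀)
        (f := fun j => min (t j) 2)
      refine le_trans this ?_
      rw [← hQdef]
      apply mul_le_mul_of_nonneg_right _ hQ0
      have : (Finset.univ.erase j₀).card ≤ n := by
        simpa using (Finset.card_erase_le (s := (Finset.univ : Finset (Fin n))) (a := j₀)).trans
          (by simp)
      exact_mod_cast this
    have hSg0 : 0 ≤ ∑ j ∈ Finset.univ.erase j₀, min (t j) 2 :=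
      Finset.sum_nonneg fun j _ => le_min (ht j) (by norm_num)
    have hn1 : (1:ℝ) ≤ n := by exact_mod_cast hn
    have key : 1 + s ^ 2 / 4 ≤ 3 * (1 + M ^ 2 / 4) * ((n : ℝ) * (1 + Q)) := by
      have k1 : s ^ 2 / 4 ≤ s' ^ 2 := by nlinarith
      have k2 : s' ^ 2 ≤ (1 + M / 2) ^ 2 * ((n:ℝ) * Q) := by
        have h1M : 0 ≤ 1 + M / 2 := by linarith
        calc s' ^ 2 ≤ ((1 + M / 2) * ∑ j ∈ Finset.univ.erase j₀, min (t j) 2) ^ 2 := by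
              apply sq_le_sq' (by nlinarith) hSg
          _ = (1 + M / 2) ^ 2 * (∑ j ∈ Finset.univ.erase j₀, min (t j) 2) ^ 2 := by ring
          _ ≤ (1 + M / 2) ^ 2 * ((n:ℝ) * Q) := by
              apply mul_le_mul_of_nonneg_left hCS (by positivity)
      have k3 : (1 + M / 2) ^ 2 ≤ 3 * (1 + M ^ 2 / 4) := by nlinarith [sq_nonneg (M - 1)]
      have k4 : (1 + M / 2) ^ 2 * ((n:ℝ) * Q) ≤ 3 * (1 + M ^ 2 / 4) * ((n:ℝ) * Q) :=
        mul_le_mul_of_nonneg_right k3 (by positivity)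
      have k5 : (1:ℝ) ≤ 3 * (1 + M ^ 2 / 4) * n := by nlinarith [sq_nonneg M]
      linarith [k1, k2, k4]
    -- logarithmic estimates
    have hlog2 : Real.log (1 + s ^ 2 / 4) ≤ Real.log 3 + ℓ + Ln + Real.log (1 + Q) := by
      have h1 : Real.log (1 + s ^ 2 / 4) ≤ Real.log (3 * (1 + M ^ 2 / 4) * ((n:ℝ) * (1 + Q))) :=
        Real.log_le_log (by positivity) key
      have hn0 : (0:ℝ) < n := by linarith
      have h2 : Real.log (3 * (1 + M ^ 2 / 4) * ((n:ℝ) * (1 + Q)))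
          = Real.log 3 + Real.log (1 + M ^ 2 / 4) + (Real.log n + Real.log (1 + Q)) := by
        rw [Real.log_mul (by positivity) (by positivity),
          Real.log_mul (by norm_num) (by positivity),
          Real.log_mul (by positivity) (by positivity)]
      rw [h2] at h1
      rw [hℓdef, hLndef]
      linarith
    have hlogQ : Real.log (1 + Q) ≤ (1 + Q) / 10 + (Real.log 10 - 1) := by
      have h1 : Real.log ((1 + Q) / 10) ≤ (1 + Q) / 10 - 1 :=
        Real.log_le_sub_one_of_pos (by positivity)
      have h2 : Real.log ((1 + Q) / 10) = Real.log (1 + Q) - Real.log 10 :=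
        Real.log_div (by positivity) (by norm_num)
      linarith
    -- final assembly
    have hβlog : 1 / (3 * π) * Real.log (1 + s ^ 2 / 4)
        ≤ 1 / (3 * π) * (Real.log 3 + ℓ + Ln + Real.log (1 + Q)) :=
      mul_le_mul_of_nonneg_left hlog2 hβ0
    have hβlogQ : 1 / (3 * π) * Real.log (1 + Q)
        ≤ 1 / (3 * π) * ((1 + Q) / 10 + (Real.log 10 - 1)) :=
      mul_le_mul_of_nonneg_left hlogQ hβ0
    have hqeq : 1 / (3 * π) * ((1 + Q) / 10) = 1 / (30 * π) + q := by
      rw [hqdef]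
      ring
    have h30 : Real.log 3 + Real.log 10 ≤ Real.log 150 := by
      rw [← Real.log_mul (by norm_num) (by norm_num)]
      exact Real.log_le_log (by norm_num) (by norm_num)
    have hβ30 : 1 / (3 * π) * (Real.log 3 + Real.log 10) ≤ 1 / (3 * π) * Real.log 150 :=
      mul_le_mul_of_nonneg_left h30 hβ0
    have h30π : 1 / (30 * π) ≤ 1 := by
      rw [div_le_one (by positivity)]
      nlinarith [pi_gt_three]
    refine le_trans ?_ hDX
    refine le_trans ?_ e1
    linarith [hUs, hβlog, hβlogQ, hqeq, hβ30, h30π, e2, e3, hUM, hXdef, hCcdef]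

/-- The optimal constant `J n` in the product bound for `U`. -/
noncomputable def J (n : ℕ) : ℝ :=
  sSup { x : ℝ | ∃ t : Fin n → ℝ, (∀ j, 0 ≤ t j) ∧
    x = (1 + U (∑ j, t j)) / ∏ j, (1 + U (t j)) }

lemma elem_le (n : ℕ) (hn : 1 ≤ n) {x : ℝ}
    (hx : x ∈ { x : ℝ | ∃ t : Fin n → ℝ, (∀ j, 0 ≤ t j) ∧
      x = (1 + U (∑ j, t j)) / ∏ j, (1 + U (t j)) }) :
    x ≤ 1 / (3 * π) * Real.log n + (2 + 1 / (2 * π) + 1 / (3 * π) * Real.log 150) := by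
  obtain ⟨t, ht, rfl⟩ := hx
  have hD1 : (1:ℝ) ≤ ∏ j, (1 + U (t j)) := by
    refine le_trans ?_ (one_add_sum_le_prod Finset.univ (fun j => U (t j)) fun j => U_nonneg _)
    have : 0 ≤ ∑ j, U (t j) := Finset.sum_nonneg fun j _ => U_nonneg _
    linarith
  rw [div_le_iff₀ (by linarith)]
  exact le_of_le_of_eq (main_bound n hn t ht) (mul_comm _ _)

lemma X_nonneg (n : ℕ) (hn : 1 ≤ n) :
    0 ≤ 1 / (3 * π) * Real.log n + (2 + 1 / (2 * π) + 1 / (3 * π) * Real.log 150) := by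
  have hπ : 0 < π := pi_pos
  have h1 : 0 ≤ Real.log n := Real.log_nonneg (by exact_mod_cast hn)
  have h2 : 0 ≤ Real.log 150 := Real.log_nonneg (by norm_num)
  have := mul_nonneg (by positivity : (0:ℝ) ≤ 1 / (3 * π)) h1
  have := mul_nonneg (by positivity : (0:ℝ) ≤ 1 / (3 * π)) h2
  positivity

lemma J_le (n : ℕ) (hn : 1 ≤ n) :
    J n ≤ 1 / (3 * π) * Real.log n + (2 + 1 / (2 * π) + 1 / (3 * π) * Real.log 150) :=
  Real.sSup_le (fun _ hx => elem_le n hn hx) (X_nonneg n hn)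

lemma J_ge (n : ℕ) (hn : 2 ≤ n) :
    (1 + U (Real.sqrt n / (1 + Real.log n))) /
      (1 + U (Real.sqrt n / (1 + Real.log n) / n)) ^ n ≤ J n := by
  have hn0 : (0:ℝ) < n := by positivity
  have hlog : 0 ≤ Real.log n := Real.log_nonneg (by exact_mod_cast hn.trans' (by norm_num))
  have hA0 : 0 ≤ Real.sqrt n / (1 + Real.log n) := by positivity
  apply le_csSup
  · exact ⟨_, fun x hx => elem_le n (by omega) hx⟩
  · refine ⟨fun _ => Real.sqrt n / (1 + Real.log n) / n, fun j => by positivity, ?_⟩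
    congr 1
    · congr 2
      rw [Finset.sum_const, Finset.card_univ, Fintype.card_fin, nsmul_eq_mul]
      field_simp
    · rw [Finset.prod_const, Finset.card_univ, Fintype.card_fin]

lemma J_lower (n : ℕ) (hn : 2 ≤ n) :
    (1 - 1 / (2 * π) - 1 / (3 * π) * Real.log 4 + 1 / (3 * π) * Real.log n
        - 2 / (3 * π) * Real.log (1 + Real.log n))
      / Real.exp (1 / (15 * π) * ((1 + Real.log n)⁻¹) ^ 2) ≤ J n := by
  have hπ : 0 < π := pi_pos
  have hβ0 : (0:ℝ) ≤ 1 / (3 * π) := by positivity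
  have hn0 : (0:ℝ) < n := by positivity
  have hL0 : 0 ≤ Real.log n := Real.log_nonneg (by exact_mod_cast hn.trans' (by norm_num))
  have h1L : (0:ℝ) < 1 + Real.log n := by linarith
  have hsq : (0:ℝ) < Real.sqrt n := Real.sqrt_pos.mpr hn0
  have hJ := J_ge n hn
  set L : ℝ := Real.log n with hLdef
  set A : ℝ := Real.sqrt n / (1 + L) with hAdef
  have hA0 : 0 < A := by positivity
  have hA2 : A ^ 2 = (n : ℝ) / (1 + L) ^ 2 := by
    rw [hAdef, div_pow, Real.sq_sqrt hn0.le]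
  -- numerator lower bound
  have hlogA : Real.log A = L / 2 - Real.log (1 + L) := by
    rw [hAdef, Real.log_div hsq.ne' h1L.ne', Real.log_sqrt hn0.le]
  have hNlb : 1 - 1 / (2 * π) - 1 / (3 * π) * Real.log 4 + 1 / (3 * π) * L
      - 2 / (3 * π) * Real.log (1 + L) ≤ 1 + U A := by
    have h1 := U_ge_log A
    have h2 : Real.log (A ^ 2 / 4) ≤ Real.log (1 + A ^ 2 / 4) :=
      Real.log_le_log (by positivity) (by linarith)
    have h3 : Real.log (A ^ 2 / 4) = 2 * Real.log A - Real.log 4 := by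
      rw [Real.log_div (by positivity) (by norm_num), Real.log_pow]
      push_cast
      ring
    have h4 : 1 / (3 * π) * Real.log (A ^ 2 / 4) ≤ 1 / (3 * π) * Real.log (1 + A ^ 2 / 4) :=
      mul_le_mul_of_nonneg_left h2 hβ0
    rw [h3, hlogA] at h4
    have h5 : 1 / (3 * π) * (2 * (L / 2 - Real.log (1 + L)) - Real.log 4)
        = 1 / (3 * π) * L - 2 / (3 * π) * Real.log (1 + L) - 1 / (3 * π) * Real.log 4 := by
      ring
    linarith [h4, h1]
  -- denominator upper bound
  have hden : (1 + U (A / n)) ^ n ≤ Real.exp (1 / (15 * π) * ((1 + L)⁻¹) ^ 2) := by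
    have h1 : U (A / n) ≤ (A / n) ^ 2 / (15 * π) := U_le_sq _
    have h2 : 1 + U (A / n) ≤ Real.exp ((A / n) ^ 2 / (15 * π)) := by
      have := Real.add_one_le_exp ((A / n) ^ 2 / (15 * π))
      linarith
    have h3 : (1 + U (A / n)) ^ n ≤ Real.exp ((A / n) ^ 2 / (15 * π)) ^ n :=
      pow_le_pow_left₀ (by linarith [U_nonneg (A / n)]) h2 n
    refine h3.trans ?_
    rw [← Real.exp_nat_mul]
    apply Real.exp_le_exp.mpr
    apply le_of_eq
    rw [div_pow, hA2]
    field_simp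
  have hDpos : 0 < (1 + U (A / n)) ^ n := pow_pos (by linarith [U_nonneg (A / n)]) n
  have hNpos : (0:ℝ) < 1 + U A := by linarith [U_nonneg A]
  set P : ℝ := 1 - 1 / (2 * π) - 1 / (3 * π) * Real.log 4 + 1 / (3 * π) * L
      - 2 / (3 * π) * Real.log (1 + L) with hPdef
  have hE1 : (1:ℝ) ≤ Real.exp (1 / (15 * π) * ((1 + L)⁻¹) ^ 2) :=
    Real.one_le_exp (by positivity)
  refine le_trans ?_ hJ
  rcases le_or_gt P 0 with hP | hP
  · refine le_trans (div_nonpos_of_nonpos_of_nonneg hP (by positivity)) ?_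
    positivity
  · exact div_le_div₀ hNpos.le hNlb hDpos hden

theorem J_asymptotics :
    Tendsto (fun n : ℕ => J n / Real.log n) atTop (nhds (1 / (3 * π))) := by
  have hπ : 0 < π := pi_pos
  have hlogtop : Tendsto (fun n : ℕ => Real.log n) atTop atTop :=
    Real.tendsto_log_atTop.comp tendsto_natCast_atTop_atTop
  have hinv : Tendsto (fun n : ℕ => (Real.log n)⁻¹) atTop (nhds 0) :=
    hlogtop.inv_tendsto_atTop
  have h1L : Tendsto (fun n : ℕ => 1 + Real.log n) atTop atTop :=
    tendsto_atTop_add_const_left _ 1 hlogtop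
  have hloglog : Tendsto (fun n : ℕ => Real.log (1 + Real.log n) / Real.log n)
      atTop (nhds 0) := by
    have base := Real.tendsto_pow_log_div_mul_add_atTop 1 (-1) 1 one_ne_zero
    have hcomp := base.comp h1L
    apply hcomp.congr
    intro n
    simp only [Function.comp_apply, pow_one]
    rw [show (1:ℝ) * (1 + Real.log n) + -1 = Real.log n from by ring]
  have hE : Tendsto (fun n : ℕ => Real.exp (1 / (15 * π) * ((1 + Real.log n)⁻¹) ^ 2))
      atTop (nhds 1) := by
    have hinv2 : Tendsto (fun n : ℕ => (1 + Real.log n)⁻¹) atTop (nhds 0) :=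
      h1L.inv_tendsto_atTop
    have h2 : Tendsto (fun n : ℕ => 1 / (15 * π) * ((1 + Real.log n)⁻¹) ^ 2)
        atTop (nhds 0) := by
      have := (hinv2.pow 2).const_mul (1 / (15 * π))
      simpa using this
    have := (Real.continuous_exp.tendsto 0).comp h2
    simpa [Function.comp_def] using this
  have hup : Tendsto (fun n : ℕ => 1 / (3 * π)
      + (2 + 1 / (2 * π) + 1 / (3 * π) * Real.log 150) * (Real.log n)⁻¹)
      atTop (nhds (1 / (3 * π))) := by
    have := (hinv.const_mul (2 + 1 / (2 * π) + 1 / (3 * π) * Real.log 150)).const_add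
      (1 / (3 * π))
    simpa using this
  have hlo : Tendsto (fun n : ℕ =>
      ((1 - 1 / (2 * π) - 1 / (3 * π) * Real.log 4) * (Real.log n)⁻¹ + 1 / (3 * π)
        - 2 / (3 * π) * (Real.log (1 + Real.log n) / Real.log n))
      * (Real.exp (1 / (15 * π) * ((1 + Real.log n)⁻¹) ^ 2))⁻¹)
      atTop (nhds (1 / (3 * π))) := by
    have hP : Tendsto (fun n : ℕ =>
        (1 - 1 / (2 * π) - 1 / (3 * π) * Real.log 4) * (Real.log n)⁻¹ + 1 / (3 * π)
          - 2 / (3 * π) * (Real.log (1 + Real.log n) / Real.log n))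
        atTop (nhds (1 / (3 * π))) := by
      have t1 := hinv.const_mul (1 - 1 / (2 * π) - 1 / (3 * π) * Real.log 4)
      have t2 := hloglog.const_mul (2 / (3 * π))
      have := (t1.add (tendsto_const_nhds (x := 1 / (3 * π)))).sub t2
      simpa using this
    have := hP.mul (hE.inv₀ one_ne_zero)
    simpa using this
  apply tendsto_of_tendsto_of_tendsto_of_le_of_le' hlo hup
  · filter_upwards [eventually_ge_atTop 2] with n hn
    have h2 : (2:ℝ) ≤ n := by exact_mod_cast hn
    have hln : 0 < Real.log n := Real.log_pos (by linarith)
    have hJl := J_lower n hn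
    have hdiv := div_le_div_of_nonneg_right'' hJl hln
    refine le_trans (le_of_eq ?_) hdiv
    have hE0 : Real.exp (1 / (15 * π) * ((1 + Real.log n)⁻¹) ^ 2) ≠ 0 := Real.exp_ne_zero _
    field_simp
  · filter_upwards [eventually_ge_atTop 2] with n hn
    have h2 : (2:ℝ) ≤ n := by exact_mod_cast hn
    have hln : 0 < Real.log n := Real.log_pos (by linarith)
    rw [div_le_iff₀ hln]
    refine le_trans (J_le n (by omega)) (le_of_eq ?_)
    field_simp
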